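/- For every natural number k ≥ 1 and reals c, t with ct > 0, one has (2·(2k)!/(k!(k−1)!))·∫₀^{ct} (c²t² − β²)^{k−1}(ct−β)/(2ct)^{2k} dβ = 1 − C(2k,k)/2^{2k}, where C(2k,k) is the central binomial coefficient. -/

import Mathlib

/-!
Put `a = c t`. Splitting `a - β`, the integral is `a J_(k-1) - ∫₀^a (a² - β²)^(k-1) β`, where the second
term has the primitive `-(a² - β²)^k / (2k)` and the Wallis-type integral `J_n = ∫₀^a (a² - x²)^n` satisfies
`(2n+3) J_(n+1) = (2n+2) a² J_n` (differentiate `x (a² - x²)^(n+1)`), so `J_n = 4^n n!² a^(2n+1) / (2n+1)!`.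
After dividing by `(2a)^(2k)`, the constant `2 (2k)! / (k! (k-1)!)` turns the first piece into exactly `1`
and the second into `C(2k,k) / 4^k`.
-/

open Nat intervalIntegral

lemma hasDerivAt_sq_sub_sq (a x : ℝ) : HasDerivAt (fun x : ℝ => a ^ 2 - x ^ 2) (-(2 * x)) x := by
  simpa using (hasDerivAt_pow 2 x).const_sub (a ^ 2)

lemma integral_sq_sub_sq_pow_succ (n : ℕ) (a : ℝ) :
    (2 * n + 3 : ℝ) * ∫ x in (0:ℝ)..a, (a ^ 2 - x ^ 2) ^ (n + 1) =
      (2 * n + 2) * a ^ 2 * ∫ x in (0:ℝ)..a, (a ^ 2 - x ^ 2) ^ n := by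
  have hderiv : ∀ x : ℝ, HasDerivAt (fun x : ℝ => x * (a ^ 2 - x ^ 2) ^ (n + 1))
      ((2 * n + 3) * (a ^ 2 - x ^ 2) ^ (n + 1) - (2 * n + 2) * a ^ 2 * (a ^ 2 - x ^ 2) ^ n) x := by
    intro x
    refine ((hasDerivAt_id' x).mul ((hasDerivAt_sq_sub_sq a x).pow (n + 1))).congr_deriv ?_
    simp only [Pi.pow_apply, Nat.cast_add, Nat.cast_one, Nat.add_sub_cancel]
    ring
  have hftc := integral_eq_sub_of_hasDerivAt (a := 0) (b := a) (fun x _ => hderiv x)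
    (Continuous.intervalIntegrable (by fun_prop) _ _)
  rw [integral_sub (Continuous.intervalIntegrable (by fun_prop) _ _)
    (Continuous.intervalIntegrable (by fun_prop) _ _), integral_const_mul, integral_const_mul]
    at hftc
  simp only [sub_self, zero_pow (Nat.succ_ne_zero n), mul_zero, zero_mul] at hftc
  linarith

lemma integral_sq_sub_sq_pow (n : ℕ) (a : ℝ) :
    ∫ x in (0:ℝ)..a, (a ^ 2 - x ^ 2) ^ n =
      4 ^ n * (n ! : ℝ) ^ 2 * a ^ (2 * n + 1) / (2 * n + 1)! := by
  induction n with
  | zero => simp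
  | succ n ih =>
    have hrec := integral_sq_sub_sq_pow_succ n a
    rw [ih] at hrec
    rw [show 2 * (n + 1) + 1 = (2 * n + 1) + 1 + 1 by ring, factorial_succ (2 * n + 1 + 1),
      factorial_succ (2 * n + 1), factorial_succ n]
    push_cast
    field_simp at hrec ⊢
    linear_combination (2 * n + 2 : ℝ) * hrec

lemma integral_sq_sub_sq_pow_mul_self (n : ℕ) (a : ℝ) :
    ∫ x in (0:ℝ)..a, (a ^ 2 - x ^ 2) ^ n * x = a ^ (2 * n + 2) / (2 * n + 2) := by
  have hderiv : ∀ x : ℝ, HasDerivAt (fun x : ℝ => -(a ^ 2 - x ^ 2) ^ (n + 1) / (2 * n + 2))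
      ((a ^ 2 - x ^ 2) ^ n * x) x := by
    intro x
    refine (((hasDerivAt_sq_sub_sq a x).pow (n + 1)).neg.div_const _).congr_deriv ?_
    push_cast
    field_simp
  rw [integral_eq_sub_of_hasDerivAt (fun x _ => hderiv x)
    (Continuous.intervalIntegrable (by fun_prop) _ _), sub_self, zero_pow (Nat.succ_ne_zero n)]
  ring

lemma integral_sq_sub_sq_pow_mul_sub (n : ℕ) (a : ℝ) :
    ∫ x in (0:ℝ)..a, (a ^ 2 - x ^ 2) ^ n * (a - x) =
      a ^ (2 * n + 2) * (4 ^ n * (n ! : ℝ) ^ 2 / (2 * n + 1)! - 1 / (2 * n + 2)) := by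
  simp_rw [mul_sub]
  rw [integral_sub (Continuous.intervalIntegrable (by fun_prop) _ _)
    (Continuous.intervalIntegrable (by fun_prop) _ _), integral_mul_const,
    integral_sq_sub_sq_pow, integral_sq_sub_sq_pow_mul_self]
  ring

lemma two_mul_factorial_mul_wallis (m : ℕ) :
    2 * ((2 * m + 2)! : ℝ) / ((m + 1)! * m !) * (4 ^ m * (m ! : ℝ) ^ 2 / (2 * m + 1)!) =
      4 ^ (m + 1) := by
  rw [factorial_succ (2 * m + 1), factorial_succ m]
  push_cast
  field_simp
  ring

lemma two_mul_factorial_div_eq_choose (m : ℕ) :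
    2 * ((2 * m + 2)! : ℝ) / ((m + 1)! * m !) / (2 * m + 2) = (2 * m + 2).choose (m + 1) := by
  have hchoose := Nat.choose_mul_factorial_mul_factorial (n := 2 * m + 2) (k := m + 1) (by omega)
  rw [show 2 * m + 2 - (m + 1) = m + 1 by omega] at hchoose
  rw [← hchoose, factorial_succ m]
  push_cast
  field_simp

theorem stmt_2 (k : ℕ) (hk : 1 ≤ k) (c t : ℝ) (h : 0 < c * t) :
    2 * (Nat.factorial (2 * k) : ℝ) / ((Nat.factorial k : ℝ) * (Nat.factorial (k - 1) : ℝ)) *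
      ∫ β in (0:ℝ)..(c * t),
        (c ^ 2 * t ^ 2 - β ^ 2) ^ (k - 1) * (c * t - β) / (2 * c * t) ^ (2 * k) =
      1 - (Nat.choose (2 * k) k : ℝ) / 2 ^ (2 * k) := by
  obtain ⟨m, rfl⟩ := Nat.exists_eq_add_of_le' hk
  have hsq : c ^ 2 * t ^ 2 = (c * t) ^ 2 := by ring
  rw [hsq, mul_assoc 2 c t, integral_div, Nat.add_sub_cancel, integral_sq_sub_sq_pow_mul_sub,
    show 2 * (m + 1) = 2 * m + 2 by ring]
  generalize c * t = a at h ⊢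
  have hpow : (2 : ℝ) ^ (2 * m + 2) = 4 ^ (m + 1) := by
    rw [show 2 * m + 2 = 2 * (m + 1) by ring, pow_mul]; norm_num
  calc _ = (2 * ((2 * m + 2)! : ℝ) / ((m + 1)! * m !) * (4 ^ m * (m ! : ℝ) ^ 2 / (2 * m + 1)!) -
          2 * ((2 * m + 2)! : ℝ) / ((m + 1)! * m !) / (2 * m + 2)) / 2 ^ (2 * m + 2) := by
        rw [mul_pow]
        field_simp
    _ = _ := by
        rw [two_mul_factorial_mul_wallis, two_mul_factorial_div_eq_choose, hpow]
        field_simp
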